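/- Let m ∈ ℝ^d, let sᵢ be the sign of mᵢ (with sᵢ ∈ {−1,1}), let ε ≥ 0, and let K = { y : Σᵢ yᵢ sᵢ ≤ ε, yᵢ sᵢ ≥ 0 ∀i }. For μ ≥ 0 define y(μ) by yᵢ(μ) = sᵢ · max(sᵢ mᵢ − μ, 0). If μ* ≥ 0 satisfies Σᵢ yᵢ(μ*) sᵢ ≤ ε, and moreover μ* = 0 or Σᵢ yᵢ(μ*) sᵢ = ε, then y(μ*) is the Euclidean projection of m onto K. -/

import Mathlib

/-!
Flipping the coordinates by the signs `sᵢ` is an isometry that turns `K` into the capped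
orthant `{w ≥ 0, ∑ wᵢ ≤ ε}` and `m` into `t = (sᵢ mᵢ)ᵢ`, so it suffices to project `t` there.
For `b = (t - μ)⁺` one has `(tᵢ - bᵢ) bᵢ = μ bᵢ` and `tᵢ - bᵢ ≤ μ`, hence for every feasible `w`
`⟪t - b, b - w⟫ ≥ μ (∑ bᵢ - ε)`, which vanishes by complementary slackness. This is the
variational inequality characterising the projection.
-/

open Finset

variable {ι : Type*} [Fintype ι]

theorem sum_sq_sub_le_of_sum_mul_sub_nonneg {x y z : ι → ℝ}
    (h : 0 ≤ ∑ i, (x i - y i) * (y i - z i)) :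
    ∑ i, (x i - y i) ^ 2 ≤ ∑ i, (x i - z i) ^ 2 := by
  have hexpand : ∑ i, (x i - z i) ^ 2 = ∑ i, (x i - y i) ^ 2 + ∑ i, (y i - z i) ^ 2
      + 2 * ∑ i, (x i - y i) * (y i - z i) := by
    rw [mul_sum, ← sum_add_distrib, ← sum_add_distrib]
    exact sum_congr rfl fun i _ => by ring
  linarith [sum_nonneg fun i (_ : i ∈ univ) => sq_nonneg (y i - z i)]

theorem mul_sub_le_sub_max_mul_sub (t μ : ℝ) {w : ℝ} (hw : 0 ≤ w) :
    μ * (max (t - μ) 0 - w) ≤ (t - max (t - μ) 0) * (max (t - μ) 0 - w) := by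
  rcases le_total (t - μ) 0 with h | h
  · rw [max_eq_right h]
    nlinarith
  · rw [max_eq_left h, sub_sub_cancel]

theorem sum_mul_sub_max_nonneg {t w : ι → ℝ} {μ ε : ℝ} (hμ : 0 ≤ μ) (hw : ∀ i, 0 ≤ w i)
    (hwε : ∑ i, w i ≤ ε) (hcompl : μ = 0 ∨ ∑ i, max (t i - μ) 0 = ε) :
    0 ≤ ∑ i, (t i - max (t i - μ) 0) * (max (t i - μ) 0 - w i) :=
  calc 0 = μ * (∑ i, max (t i - μ) 0 - ε) := by
        rcases hcompl with h | h <;> simp [h]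
    _ ≤ μ * (∑ i, max (t i - μ) 0 - ∑ i, w i) := mul_le_mul_of_nonneg_left (by linarith) hμ
    _ = ∑ i, μ * (max (t i - μ) 0 - w i) := by rw [← sum_sub_distrib, mul_sum]
    _ ≤ _ := sum_le_sum fun i _ => mul_sub_le_sub_max_mul_sub (t i) μ (hw i)

theorem sum_sq_sub_max_le {t w : ι → ℝ} {μ ε : ℝ} (hμ : 0 ≤ μ) (hw : ∀ i, 0 ≤ w i)
    (hwε : ∑ i, w i ≤ ε) (hcompl : μ = 0 ∨ ∑ i, max (t i - μ) 0 = ε) :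
    ∑ i, (t i - max (t i - μ) 0) ^ 2 ≤ ∑ i, (t i - w i) ^ 2 :=
  sum_sq_sub_le_of_sum_mul_sub_nonneg (sum_mul_sub_max_nonneg hμ hw hwε hcompl)

theorem waterfilling_is_projection_general (d : ℕ) (m s : Fin d → ℝ)
    (hs : ∀ i, (0 < m i → s i = 1) ∧ (m i < 0 → s i = -1) ∧ (s i = 1 ∨ s i = -1))
    (ε : ℝ) (μstar : ℝ) (hμ : 0 ≤ μstar)
    (hfeas : ∑ i, (s i * max (s i * m i - μstar) 0) * s i ≤ ε)
    (hcompl : μstar = 0 ∨ ∑ i, (s i * max (s i * m i - μstar) 0) * s i = ε) :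
    ((∑ i, (s i * max (s i * m i - μstar) 0) * s i ≤ ε ∧
        ∀ i, 0 ≤ (s i * max (s i * m i - μstar) 0) * s i) ∧
      ∀ z : Fin d → ℝ, (∑ i, z i * s i ≤ ε ∧ ∀ i, 0 ≤ z i * s i) →
        ∑ i, (m i - s i * max (s i * m i - μstar) 0) ^ 2 ≤
          ∑ i, (m i - z i) ^ 2) := by
  have hss : ∀ i, s i * s i = 1 := fun i => by
    rcases (hs i).2.2 with h | h <;> simp [h]
  have hunflip : ∀ i y, s i * y * s i = y := fun i y => by linear_combination y * hss i
  refine ⟨⟨hfeas, fun i => by simp only [hunflip, le_max_right]⟩, ?_⟩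
  rintro z ⟨hzε, hz⟩
  simp only [hunflip] at hcompl
  calc ∑ i, (m i - s i * max (s i * m i - μstar) 0) ^ 2
        = ∑ i, (s i * m i - max (s i * m i - μstar) 0) ^ 2 :=
          sum_congr rfl fun i _ => by
            linear_combination (max (s i * m i - μstar) 0 ^ 2 - m i ^ 2) * hss i
    _ ≤ ∑ i, (s i * m i - z i * s i) ^ 2 := sum_sq_sub_max_le hμ hz hzε hcompl
    _ = ∑ i, (m i - z i) ^ 2 :=
          sum_congr rfl fun i _ => by linear_combination (m i - z i) ^ 2 * hss i

/-- Water-filling formula for the projection onto K: if μ* ≥ 0 satisfies the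
complementary-slackness conditions, then y(μ*), with yᵢ(μ) = sᵢ(sᵢmᵢ − μ)⁺,
is the Euclidean projection of m onto K = { y : Σᵢ yᵢsᵢ ≤ ε, yᵢsᵢ ≥ 0 }. -/
theorem waterfilling_is_projection (d : ℕ) (m s : Fin d → ℝ)
    (hs : ∀ i, (0 < m i → s i = 1) ∧ (m i < 0 → s i = -1) ∧ (s i = 1 ∨ s i = -1))
    (ε : ℝ) (hε : 0 ≤ ε) (μstar : ℝ) (hμ : 0 ≤ μstar)
    (hfeas : ∑ i, (s i * max (s i * m i - μstar) 0) * s i ≤ ε)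
    (hcompl : μstar = 0 ∨ ∑ i, (s i * max (s i * m i - μstar) 0) * s i = ε) :
    ((∑ i, (s i * max (s i * m i - μstar) 0) * s i ≤ ε ∧
        ∀ i, 0 ≤ (s i * max (s i * m i - μstar) 0) * s i) ∧
      ∀ z : Fin d → ℝ, (∑ i, z i * s i ≤ ε ∧ ∀ i, 0 ≤ z i * s i) →
        ∑ i, (m i - s i * max (s i * m i - μstar) 0) ^ 2 ≤
          ∑ i, (m i - z i) ^ 2) :=
  waterfilling_is_projection_general d m s hs ε μstar hμ hfeas hcompl
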